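/- arXiv:2501.05850 — 2 statements merged into one kernel-verified Lean document; each statement's English description precedes it below -/
import Mathlib

section
/- Let M be a real nonassociative algebra with unit having a basis {1, i, j, k} whose multiplication is given by table (Tn) with parameters a, b, c, d, f, g, h, e ∈ ℝ, and assume that for every q ∈ M with q² = −1 and every y ∈ M one has (q, q, y) = 0 and (y, q, q) = 0. If there exists q ∈ M with q² = −1 that does not lie in span_ℝ{1, i}, then b = c = d = 0 and the set of imaginary units of M equals { x·i + y·j + z·k : x, y, z ∈ ℝ, −x² + a(y² + z²) = −1 }. -/
/-!
Write an imaginary unit as `q = w + x i + y j + z k` and put `n = y² + z²`, `s = j² = k²`,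
`t = jk = -kj`. Left and right multiplication by `i` rotate the plane `span {j, k}`, so the
associators reduce to `(q, q, i) = n (s i + t)` and `(i, q, q) = -n (i s + t)`. For `q` outside
`span {1, i}` we have `n ≠ 0`, hence `s i = i s = -t`: `s` lies in `span {1, i}` (`c = d = 0`)
and `t = -s i`. In this algebra `(q, q, j) = 2 n b k`, so also `b = 0`, and then
`q² = w² - x² + a n + 2 w (x i + y j + z k)`, which is `-1` exactly when `w = 0` and
`-x² + a n = -1`.
-/

/-- The associator of a nonassociative algebra: `(x, y, z) = (xy)z - x(yz)`. -/
def assocator {A : Type*} [NonAssocRing A] (x y z : A) : A :=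
  x * y * z - x * (y * z)

theorem LinearIndependent.eq_zero_of_fin_four {R M : Type*} [Ring R] [AddCommGroup M]
    [Module R M] {v₀ v₁ v₂ v₃ : M} (hv : LinearIndependent R ![v₀, v₁, v₂, v₃]) {w x y z : R}
    (h : w • v₀ + x • v₁ + y • v₂ + z • v₃ = 0) : w = 0 ∧ x = 0 ∧ y = 0 ∧ z = 0 := by
  have := Fintype.linearIndependent_iff.mp hv ![w, x, y, z] (by simpa [Fin.sum_univ_four] using h)
  exact ⟨this 0, this 1, this 2, this 3⟩

theorem Module.Basis.exists_eq_fin_four {R M : Type*} [Semiring R] [AddCommMonoid M] [Module R M]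
    (B : Module.Basis (Fin 4) R M) (p : M) :
    ∃ w x y z : R, p = w • B 0 + x • B 1 + y • B 2 + z • B 3 :=
  ⟨B.repr p 0, B.repr p 1, B.repr p 2, B.repr p 3, by
    rw [← Fin.sum_univ_four (f := fun n => B.repr p n • B n), B.sum_repr]⟩

theorem sq_add_sq_ne_zero_of_notMem_span {M : Type*} [AddCommMonoid M] [One M] [Module ℝ M]
    {i j k : M} {w x y z : ℝ}
    (h : w • 1 + x • i + y • j + z • k ∉ Submodule.span ℝ ({1, i} : Set M)) :
    y ^ 2 + z ^ 2 ≠ 0 := by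
  intro hyz
  obtain rfl : y = 0 := by nlinarith [sq_nonneg y, sq_nonneg z]
  obtain rfl : z = 0 := by nlinarith [sq_nonneg z]
  refine h ?_
  simp only [zero_smul, add_zero]
  exact add_mem (Submodule.smul_mem _ w (Submodule.subset_span (by simp)))
    (Submodule.smul_mem _ x (Submodule.subset_span (by simp)))

structure IsTnTable {M : Type*} [Mul M] [One M] [Neg M] (i j k s t : M) : Prop where
  ii : i * i = -1
  ij : i * j = k
  ik : i * k = -j
  ji : j * i = -k
  ki : k * i = j
  jj : j * j = s
  kk : k * k = s
  jk : j * k = t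
  kj : k * j = -t

namespace IsTnTable

variable {M : Type*} [NonAssocRing M] [Module ℝ M] [SMulCommClass ℝ M M] [IsScalarTower ℝ M M]
  {i j k s t : M}

theorem mul_self (T : IsTnTable i j k s t) (w x y z : ℝ) :
    (w • 1 + x • i + y • j + z • k) * (w • 1 + x • i + y • j + z • k) =
      (w ^ 2 - x ^ 2) • 1 + (2 * w * x) • i + (2 * w * y) • j + (2 * w * z) • k +
        (y ^ 2 + z ^ 2) • s := by
  simp only [mul_add, add_mul, smul_mul_assoc, mul_smul_comm, one_mul, mul_one, T.ii, T.ij,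
    T.ik, T.ji, T.ki, T.jj, T.kk, T.jk, T.kj]
  module

theorem assocator_self_self_i (T : IsTnTable i j k s t) (w x y z : ℝ) :
    assocator (w • 1 + x • i + y • j + z • k) (w • 1 + x • i + y • j + z • k) i =
      (y ^ 2 + z ^ 2) • (s * i + t) := by
  simp only [assocator, mul_add, add_mul, smul_mul_assoc, mul_smul_comm, one_mul, mul_one,
    neg_mul, mul_neg, T.ii, T.ij, T.ik, T.ji, T.ki, T.jj, T.kk, T.jk, T.kj]
  module

theorem assocator_i_self_self (T : IsTnTable i j k s t) (w x y z : ℝ) :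
    assocator i (w • 1 + x • i + y • j + z • k) (w • 1 + x • i + y • j + z • k) =
      -((y ^ 2 + z ^ 2) • (i * s + t)) := by
  simp only [assocator, mul_add, add_mul, smul_mul_assoc, mul_smul_comm, one_mul, mul_one,
    neg_mul, mul_neg, T.ii, T.ij, T.ik, T.ji, T.ki, T.jj, T.kk, T.jk, T.kj]
  module

theorem assocator_self_self_j {a b : ℝ} (T : IsTnTable i j k (a • 1 + b • i) (b • 1 - a • i))
    (w x y z : ℝ) :
    assocator (w • 1 + x • i + y • j + z • k) (w • 1 + x • i + y • j + z • k) j =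
      (2 * (y ^ 2 + z ^ 2) * b) • k := by
  simp only [assocator, mul_add, add_mul, mul_sub, sub_mul, smul_mul_assoc, mul_smul_comm,
    one_mul, mul_one, neg_mul, mul_neg, T.ii, T.ij, T.ik, T.ji, T.ki, T.jj, T.kk, T.jk, T.kj]
  module

theorem params_of_mul_i_add_eq_zero {a b c d f g h e : ℝ}
    (T : IsTnTable i j k (a • 1 + b • i + c • j + d • k) (f • 1 + g • i + h • j + e • k))
    (hli : LinearIndependent ℝ ![(1 : M), i, j, k])
    (hright : (a • 1 + b • i + c • j + d • k) * i + (f • 1 + g • i + h • j + e • k) = 0)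
    (hleft : i * (a • 1 + b • i + c • j + d • k) + (f • 1 + g • i + h • j + e • k) = 0) :
    c = 0 ∧ d = 0 ∧ f = b ∧ g = -a ∧ h = 0 ∧ e = 0 := by
  have hr : (f - b) • 1 + (a + g) • i + (h + d) • j + (e - c) • k = 0 := by
    rw [← hright]
    simp only [add_mul, smul_mul_assoc, one_mul, T.ii, T.ji, T.ki]
    module
  have hl : (f - b) • 1 + (a + g) • i + (h - d) • j + (e + c) • k = 0 := by
    rw [← hleft]
    simp only [mul_add, mul_smul_comm, mul_one, T.ii, T.ij, T.ik]
    module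
  obtain ⟨hr0, hr1, hr2, hr3⟩ := hli.eq_zero_of_fin_four hr
  obtain ⟨-, -, hl2, hl3⟩ := hli.eq_zero_of_fin_four hl
  refine ⟨?_, ?_, ?_, ?_, ?_, ?_⟩ <;> linarith

theorem mul_self_eq_neg_one_iff {a : ℝ} (T : IsTnTable i j k (a • 1) t)
    (hli : LinearIndependent ℝ ![(1 : M), i, j, k]) (w x y z : ℝ) :
    (w • 1 + x • i + y • j + z • k) * (w • 1 + x • i + y • j + z • k) = -1 ↔
      w = 0 ∧ -x ^ 2 + a * (y ^ 2 + z ^ 2) = -1 := by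
  rw [T.mul_self]
  constructor
  · intro hsq
    have hsq' : (w ^ 2 - x ^ 2 + a * (y ^ 2 + z ^ 2) + 1) • 1 + (2 * w * x) • i +
        (2 * w * y) • j + (2 * w * z) • k = 0 := by
      linear_combination (norm := module) hsq
    obtain ⟨h0, h1, h2, h3⟩ := hli.eq_zero_of_fin_four hsq'
    have hw : w = 0 := by
      by_contra hw
      obtain rfl : x = 0 := by simpa [hw] using h1
      obtain rfl : y = 0 := by simpa [hw] using h2
      obtain rfl : z = 0 := by simpa [hw] using h3
      nlinarith
    exact ⟨hw, by subst hw; linarith⟩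
  · rintro ⟨rfl, h⟩
    linear_combination (norm := module) h • (1 : M)

theorem setOf_mul_self_eq_neg_one {a : ℝ} (T : IsTnTable i j k (a • 1) t)
    (hli : LinearIndependent ℝ ![(1 : M), i, j, k])
    (hspan : ∀ p : M, ∃ w x y z : ℝ, p = w • 1 + x • i + y • j + z • k) :
    {q : M | q * q = -1} =
      {q | ∃ x y z : ℝ, q = x • i + y • j + z • k ∧ -x ^ 2 + a * (y ^ 2 + z ^ 2) = -1} := by
  ext p
  constructor
  · intro hp
    obtain ⟨w, x, y, z, rfl⟩ := hspan p
    obtain ⟨rfl, h⟩ := (T.mul_self_eq_neg_one_iff hli w x y z).mp hp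
    exact ⟨x, y, z, by module, h⟩
  · rintro ⟨x, y, z, rfl, h⟩
    have := (T.mul_self_eq_neg_one_iff hli 0 x y z).mpr ⟨rfl, h⟩
    rwa [zero_smul, zero_add] at this

end IsTnTable

/-- Lemma 2: in a real nonassociative unital algebra with basis `{1, i, j, k}` multiplying
according to table `(Tn)`, partially left and right alternative, if there is an imaginary
unit outside `span ℝ {1, i}`, then `b = c = d = 0` and the imaginary units are exactly
`x•i + y•j + z•k` with `-x² + a(y² + z²) = -1`. -/
theorem imaginaryUnits_eq_of_exists_outside {M : Type*} [NonAssocRing M] [Module ℝ M]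
    [SMulCommClass ℝ M M] [IsScalarTower ℝ M M]
    (a b c d f g h e : ℝ) (B : Module.Basis (Fin 4) ℝ M) (i j k : M)
    (hB0 : B 0 = 1) (hB1 : B 1 = i) (hB2 : B 2 = j) (hB3 : B 3 = k)
    (hii : i * i = -1) (hij : i * j = k) (hik : i * k = -j)
    (hji : j * i = -k) (hki : k * i = j)
    (hjj : j * j = a • (1 : M) + b • i + c • j + d • k)
    (hkk : k * k = a • (1 : M) + b • i + c • j + d • k)
    (hjk : j * k = f • (1 : M) + g • i + h • j + e • k)
    (hkj : k * j = -(f • (1 : M) + g • i + h • j + e • k))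
    (hPA : ∀ q : M, q * q = -1 → ∀ y : M, assocator q q y = 0 ∧ assocator y q q = 0)
    (hout : ∃ q : M, q * q = -1 ∧ q ∉ Submodule.span ℝ ({1, i} : Set M)) :
    b = 0 ∧ c = 0 ∧ d = 0 ∧
      {q : M | q * q = -1} =
        {q : M | ∃ x y z : ℝ, q = x • i + y • j + z • k ∧
          -x ^ 2 + a * (y ^ 2 + z ^ 2) = -1} := by
  have T : IsTnTable i j k (a • 1 + b • i + c • j + d • k) (f • 1 + g • i + h • j + e • k) :=
    ⟨hii, hij, hik, hji, hki, hjj, hkk, hjk, hkj⟩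
  have hli : LinearIndependent ℝ ![(1 : M), i, j, k] := by
    convert B.linearIndependent
    ext n
    fin_cases n <;> simp [hB0, hB1, hB2, hB3]
  have hspan (p : M) : ∃ w x y z : ℝ, p = w • 1 + x • i + y • j + z • k := by
    simpa only [hB0, hB1, hB2, hB3] using B.exists_eq_fin_four p
  obtain ⟨q, hqq, hq_out⟩ := hout
  obtain ⟨w, x, y, z, rfl⟩ := hspan q
  have hn := sq_add_sq_ne_zero_of_notMem_span hq_out
  have hright := (smul_eq_zero.mp
    (T.assocator_self_self_i w x y z ▸ (hPA _ hqq i).1)).resolve_left hn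
  have hleft := (smul_eq_zero.mp
    (neg_eq_zero.mp (T.assocator_i_self_self w x y z ▸ (hPA _ hqq i).2))).resolve_left hn
  obtain ⟨rfl, rfl, hf, rfl, rfl, rfl⟩ := T.params_of_mul_i_add_eq_zero hli hright hleft
  subst f
  replace T : IsTnTable i j k (a • 1 + b • i) (b • 1 - a • i) := by
    convert T using 1 <;> module
  obtain rfl : b = 0 := by
    have hqqj := T.assocator_self_self_j w x y z ▸ (hPA _ hqq j).1
    have hk : k ≠ 0 := hli.ne_zero 3
    simpa [hn, hk] using hqqj
  refine ⟨rfl, rfl, rfl, ?_⟩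
  exact IsTnTable.setOf_mul_self_eq_neg_one (by simpa only [zero_smul, add_zero] using T) hli hspan
end

section
/- Let A be a real nonassociative algebra with unit having a basis {1, i, w, v} satisfying table (Tp), let [x, y] = xy − yx, and write [v, w] = α·1 + β·i with α, β ∈ ℝ. If α ≠ 0 and β = 0, then there exists a basis {e₁, e₂, e₃, e₄} of A such that [e₂, e₃] = e₁, [e₂, e₄] = −e₃, [e₃, e₄] = e₂, and [e₁, e₂] = [e₁, e₃] = [e₁, e₄] = 0; that is, (A, [·,·]) is isomorphic to the indecomposable solvable Lie algebra 𝔤_{4,9} with zero parameter. -/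
/-! Put `e₁ = 1`, `e₂ = a • v`, `e₃ = b • w`, `e₄ = c • i`. The table gives `[v, i] = -2w` and
`[w, i] = 2v`, so the required brackets amount to `b = 2ac`, `a = 2bc` and `ab α = 1`; these are
solved by `c = ε / 2`, `b = ε a` and `ε a² α = 1` with `ε = ±1` the sign of `α`. -/

theorem Module.Basis.exists_basis_eq_smul_comp {ι ι' R M : Type*} [Semiring R] [AddCommMonoid M]
    [Module R M] (b : Module.Basis ι R M) (σ : ι' ≃ ι) {c : ι' → R} (hc : ∀ j, IsUnit (c j)) :
    ∃ b' : Module.Basis ι' R M, ∀ j, b' j = c j • b (σ j) :=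
  ⟨(b.reindex σ.symm).isUnitSMul hc, fun j => by
    simp only [Module.Basis.isUnitSMul_apply, Module.Basis.reindex_apply, Equiv.symm_symm]⟩

theorem smul_mul_sub_mul_smul {R A : Type*} [CommSemiring R] [NonUnitalNonAssocRing A]
    [Module R A] [SMulCommClass R A A] [IsScalarTower R A A] (a b : R) (x y : A) :
    (a • x) * (b • y) - (b • y) * (a • x) = (a * b) • (x * y - y * x) := by
  rw [smul_mul_smul_comm, smul_mul_smul_comm, mul_comm b a, smul_sub]

theorem Real.exists_sign_mul_sq_mul_eq_one {α : ℝ} (hα : α ≠ 0) :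
    ∃ ε a : ℝ, ε * ε = 1 ∧ a ≠ 0 ∧ ε * a ^ 2 * α = 1 := by
  rcases hα.lt_or_gt with hneg | hpos
  · refine ⟨-1, (√(-α))⁻¹, by norm_num, inv_ne_zero (Real.sqrt_ne_zero'.mpr (neg_pos.mpr hneg)), ?_⟩
    rw [inv_pow, Real.sq_sqrt (neg_nonneg.mpr hneg.le)]
    field_simp
  · refine ⟨1, (√α)⁻¹, by norm_num, inv_ne_zero (Real.sqrt_ne_zero'.mpr hpos), ?_⟩
    rw [inv_pow, Real.sq_sqrt hpos.le]
    field_simp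

theorem lie_g49_of_alpha_ne_zero_beta_zero_general {A : Type*} [NonAssocRing A] [Module ℝ A]
    [SMulCommClass ℝ A A] [IsScalarTower ℝ A A]
    (B : Module.Basis (Fin 4) ℝ A) (i w v : A)
    (hB0 : B 0 = 1) (hB1 : B 1 = i) (hB2 : B 2 = w) (hB3 : B 3 = v)
    (hiw : i * w = -v) (hiv : i * v = w)
    (hwi : w * i = v) (hvi : v * i = -w)
    (α β : ℝ) (hvw' : v * w - w * v = α • (1 : A) + β • i)
    (hα : α ≠ 0) (hβ : β = 0) :
    ∃ (B' : Module.Basis (Fin 4) ℝ A) (e₁ e₂ e₃ e₄ : A),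
      B' 0 = e₁ ∧ B' 1 = e₂ ∧ B' 2 = e₃ ∧ B' 3 = e₄ ∧
      e₂ * e₃ - e₃ * e₂ = e₁ ∧ e₂ * e₄ - e₄ * e₂ = -e₃ ∧ e₃ * e₄ - e₄ * e₃ = e₂ ∧
      e₁ * e₂ - e₂ * e₁ = 0 ∧ e₁ * e₃ - e₃ * e₁ = 0 ∧ e₁ * e₄ - e₄ * e₁ = 0 := by
  subst hβ
  obtain ⟨ε, a, hε, ha, hεaα⟩ := Real.exists_sign_mul_sq_mul_eq_one hα
  have hε0 : ε ≠ 0 := left_ne_zero_of_mul_eq_one hε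
  obtain ⟨B', hB'⟩ := B.exists_basis_eq_smul_comp (Equiv.swap 1 3) (c := ![1, a, ε * a, ε / 2])
    (by simp [Fin.forall_fin_succ, ha, hε0])
  refine ⟨B', 1, a • v, (ε * a) • w, (ε / 2) • i, ?_, ?_, ?_, ?_, ?_, ?_, ?_, ?_, ?_, ?_⟩
  · simp [hB', Equiv.swap_apply_of_ne_of_ne, hB0]
  · simp [hB', hB3]
  · simp [hB', Equiv.swap_apply_of_ne_of_ne, hB2]
  · simp [hB', hB1]
  · rw [smul_mul_sub_mul_smul, hvw', zero_smul, add_zero]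
    linear_combination (norm := module) hεaα • (1 : A)
  · rw [smul_mul_sub_mul_smul, hvi, hiv]
    module
  · rw [smul_mul_sub_mul_smul, hwi, hiw]
    linear_combination (norm := module) hε • (a • v)
  all_goals rw [one_mul, mul_one, sub_self]

/-- For a real nonassociative unital algebra `A` with basis `{1, i, w, v}` satisfying table
`(Tp)` and `[v, w] = α•1 + β•i`: if `α ≠ 0` and `β = 0`, then `A` has a basis
`{e₁, e₂, e₃, e₄}` with `[e₂,e₃] = e₁`, `[e₂,e₄] = -e₃`, `[e₃,e₄] = e₂` and `e₁` central;
that is, `(A, [·,·]) ≅ 𝔤_{4,9}` with zero parameter. -/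
theorem lie_g49_of_alpha_ne_zero_beta_zero {A : Type*} [NonAssocRing A] [Module ℝ A]
    [SMulCommClass ℝ A A] [IsScalarTower ℝ A A]
    (B : Module.Basis (Fin 4) ℝ A) (i w v : A)
    (hB0 : B 0 = 1) (hB1 : B 1 = i) (hB2 : B 2 = w) (hB3 : B 3 = v)
    (hii : i * i = -1) (hiw : i * w = -v) (hiv : i * v = w)
    (hwi : w * i = v) (hvi : v * i = -w)
    (hww : w * w ∈ Submodule.span ℝ ({1, i} : Set A))
    (hwv : w * v ∈ Submodule.span ℝ ({1, i} : Set A))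
    (hvw : v * w ∈ Submodule.span ℝ ({1, i} : Set A))
    (hvv : v * v ∈ Submodule.span ℝ ({1, i} : Set A))
    (α β : ℝ) (hvw' : v * w - w * v = α • (1 : A) + β • i)
    (hα : α ≠ 0) (hβ : β = 0) :
    ∃ (B' : Module.Basis (Fin 4) ℝ A) (e₁ e₂ e₃ e₄ : A),
      B' 0 = e₁ ∧ B' 1 = e₂ ∧ B' 2 = e₃ ∧ B' 3 = e₄ ∧
      e₂ * e₃ - e₃ * e₂ = e₁ ∧ e₂ * e₄ - e₄ * e₂ = -e₃ ∧ e₃ * e₄ - e₄ * e₃ = e₂ ∧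
      e₁ * e₂ - e₂ * e₁ = 0 ∧ e₁ * e₃ - e₃ * e₁ = 0 ∧ e₁ * e₄ - e₄ * e₁ = 0 :=
  lie_g49_of_alpha_ne_zero_beta_zero_general B i w v hB0 hB1 hB2 hB3 hiw hiv hwi hvi α β hvw' hα hβ
end
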